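/- arXiv:2412.17175 — 2 statements merged into one kernel-verified Lean document; each statement's English description precedes it below -/
import Mathlib

section
/- Let ε ∈ (0,1) and a > 0. Then ∫₀¹ |b_fpp(w) − 1/(1 + exp(−a(w − ε)))| dw ≤ (2·ln 2)/a, where b_fpp(w) = 0 if 0 ≤ w < ε and b_fpp(w) = 1 if w ≥ ε. Consequently, for every N ≥ 1, if a > 2·N·ln 2 then this integral is strictly less than 1/N. -/
open Real intervalIntegral

/-- The error constant `e = ∫₀¹ |b_fpp(w) − 1/(1 + exp(−a(w − ε)))| dw` is at
most `(2·ln 2)/a`; consequently, for every `N ≥ 1`, if `a > 2·N·ln 2` then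
`e < 1/N` (the paper's condition C2 is achievable). -/
theorem integral_error_bound (ε a : ℝ) (hε : ε ∈ Set.Ioo (0:ℝ) 1) (ha : 0 < a) :
    (∫ w in (0:ℝ)..1,
        |(if w < ε then (0:ℝ) else 1) - 1 / (1 + Real.exp (-a * (w - ε)))|)
      ≤ 2 * Real.log 2 / a ∧
    ∀ N : ℕ, 1 ≤ N → 2 * N * Real.log 2 < a →
      (∫ w in (0:ℝ)..1,
          |(if w < ε then (0:ℝ) else 1) - 1 / (1 + Real.exp (-a * (w - ε)))|)
        < 1 / N := by
  obtain ⟨hε0, hε1⟩ := hε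
  set σ : ℝ → ℝ := fun w => 1 / (1 + Real.exp (-a * (w - ε))) with hσdef
  have hden : ∀ w : ℝ, 0 < 1 + Real.exp (-a * (w - ε)) := by
    intro w; positivity
  have hσpos : ∀ w, 0 < σ w := fun w => by
    simp only [hσdef]; positivity
  have hσle : ∀ w, σ w ≤ 1 := fun w => by
    simp only [hσdef]
    rw [div_le_one (hden w)]
    nlinarith [Real.exp_pos (-a*(w-ε))]
  have hσε : σ ε = 1/2 := by
    norm_num [hσdef]
  set f : ℝ → ℝ := fun w => |(if w < ε then (0:ℝ) else 1) - σ w| with hfdef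
  have hEq1 : Set.EqOn f σ (Set.uIcc 0 ε) := by
    intro w hw
    rw [Set.uIcc_of_le hε0.le] at hw
    by_cases h : w < ε
    · simp only [hfdef, if_pos h]
      rw [zero_sub, abs_neg, abs_of_pos (hσpos w)]
    · have hwε : w = ε := le_antisymm hw.2 (not_lt.mp h)
      simp only [hfdef, if_neg h, hwε, hσε]
      norm_num
  have hEq2 : Set.EqOn f (fun w => 1 - σ w) (Set.uIcc ε 1) := by
    intro w hw
    rw [Set.uIcc_of_le hε1.le] at hw
    have h : ¬ w < ε := not_lt.mpr hw.1
    simp only [hfdef, if_neg h]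
    rw [abs_of_nonneg (by linarith [hσle w])]
  have hσc : Continuous σ := by
    apply continuous_const.div
    · continuity
    · exact fun w => ne_of_gt (hden w)
  have h1σc : Continuous (fun w => 1 - σ w) := continuous_const.sub hσc
  -- derivatives
  have hF : ∀ w : ℝ, HasDerivAt
      (fun w => w + (1/a) * Real.log (1 + Real.exp (-a * (w - ε)))) (σ w) w := by
    intro w
    have h1 : HasDerivAt (fun w : ℝ => -a * (w - ε)) (-a) w := by
      simpa using ((hasDerivAt_id w).sub_const ε).const_mul (-a)
    have h2 := (h1.exp.const_add 1).log (ne_of_gt (hden w))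
    have h3 := (hasDerivAt_id w).add (h2.const_mul (1/a))
    refine h3.congr_deriv ?_
    have hE := Real.exp_pos (-a*(w-ε))
    simp only [hσdef]
    field_simp
    ring
  have hG : ∀ w : ℝ, HasDerivAt
      (fun w => -(1/a) * Real.log (1 + Real.exp (-a * (w - ε)))) (1 - σ w) w := by
    intro w
    have h1 : HasDerivAt (fun w : ℝ => -a * (w - ε)) (-a) w := by
      simpa using ((hasDerivAt_id w).sub_const ε).const_mul (-a)
    have h2 := ((h1.exp.const_add 1).log (ne_of_gt (hden w))).const_mul (-(1/a))
    refine h2.congr_deriv ?_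
    have hE := Real.exp_pos (-a*(w-ε))
    simp only [hσdef]
    field_simp
    ring
  -- exact values
  have hI1 : ∫ w in (0:ℝ)..ε, σ w
      = (ε + (1/a) * Real.log (1 + Real.exp (-a * (ε - ε))))
        - (0 + (1/a) * Real.log (1 + Real.exp (-a * (0 - ε)))) :=
    intervalIntegral.integral_eq_sub_of_hasDerivAt (fun w _ => hF w)
      (hσc.intervalIntegrable 0 ε)
  have hI2 : ∫ w in ε..(1:ℝ), (1 - σ w)
      = (-(1/a) * Real.log (1 + Real.exp (-a * (1 - ε))))
        - (-(1/a) * Real.log (1 + Real.exp (-a * (ε - ε)))) :=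
    intervalIntegral.integral_eq_sub_of_hasDerivAt (fun w _ => hG w)
      (h1σc.intervalIntegrable ε 1)
  have hlog2 : (0:ℝ) < Real.log 2 := Real.log_pos (by norm_num)
  have hB1 : ∫ w in (0:ℝ)..ε, σ w ≤ Real.log 2 / a := by
    rw [hI1]
    have hx : a * ε ≤ Real.log (1 + Real.exp (-a * (0 - ε))) := by
      have h0 : -a * (0 - ε) = a * ε := by ring
      rw [h0]
      calc a * ε = Real.log (Real.exp (a * ε)) := (Real.log_exp _).symm
        _ ≤ Real.log (1 + Real.exp (a * ε)) :=
          Real.log_le_log (Real.exp_pos _) (by linarith [Real.exp_pos (a*ε)])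
    have h0 : -a * (ε - ε) = 0 := by ring
    rw [h0, Real.exp_zero]
    have h12 : (1:ℝ) + 1 = 2 := by norm_num
    rw [h12]
    have haa : (0:ℝ) < 1/a := by positivity
    have h1 := mul_le_mul_of_nonneg_left hx haa.le
    have h2 : (1/a) * (a*ε) = ε := by field_simp
    have h3 : Real.log 2 / a = (1/a) * Real.log 2 := by ring
    linarith
  have hB2 : ∫ w in ε..(1:ℝ), (1 - σ w) ≤ Real.log 2 / a := by
    rw [hI2]
    have h0 : -a * (ε - ε) = 0 := by ring
    rw [h0, Real.exp_zero]
    have h12 : (1:ℝ) + 1 = 2 := by norm_num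
    rw [h12]
    have hx : 0 ≤ Real.log (1 + Real.exp (-a * (1 - ε))) :=
      Real.log_nonneg (by linarith [Real.exp_pos (-a*(1-ε))])
    have haa : (0:ℝ) < 1/a := by positivity
    have h1 := mul_le_mul_of_nonneg_left hx haa.le
    have h3 : Real.log 2 / a = (1/a) * Real.log 2 := by ring
    linarith
  -- integrability of f and splitting
  have hint1 : IntervalIntegrable f MeasureTheory.volume 0 ε := by
    rw [intervalIntegrable_iff_integrableOn_Icc_of_le hε0.le]
    exact (hσc.integrableOn_Icc).congr_fun
      (fun w hw => (hEq1 (by rwa [Set.uIcc_of_le hε0.le])).symm) measurableSet_Icc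
  have hint2 : IntervalIntegrable f MeasureTheory.volume ε 1 := by
    rw [intervalIntegrable_iff_integrableOn_Icc_of_le hε1.le]
    exact (h1σc.integrableOn_Icc).congr_fun
      (fun w hw => (hEq2 (by rwa [Set.uIcc_of_le hε1.le])).symm) measurableSet_Icc
  have hsplit : (∫ w in (0:ℝ)..1, f w)
      = (∫ w in (0:ℝ)..ε, f w) + ∫ w in ε..(1:ℝ), f w :=
    (intervalIntegral.integral_add_adjacent_intervals hint1 hint2).symm
  have hc1 : (∫ w in (0:ℝ)..ε, f w) = ∫ w in (0:ℝ)..ε, σ w :=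
    intervalIntegral.integral_congr hEq1
  have hc2 : (∫ w in ε..(1:ℝ), f w) = ∫ w in ε..(1:ℝ), (1 - σ w) :=
    intervalIntegral.integral_congr hEq2
  have hmain : (∫ w in (0:ℝ)..1, f w) ≤ 2 * Real.log 2 / a := by
    rw [hsplit, hc1, hc2]
    have : Real.log 2 / a + Real.log 2 / a = 2 * Real.log 2 / a := by ring
    linarith
  refine ⟨hmain, ?_⟩
  intro N hN hNa
  have hNpos : (0:ℝ) < (N:ℝ) := by exact_mod_cast Nat.pos_of_ne_zero (by omega)
  have hlt : 2 * Real.log 2 / a < 1 / (N:ℝ) := by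
    rw [div_lt_div_iff₀ ha hNpos]
    nlinarith
  exact lt_of_le_of_lt hmain hlt
end

section
/- Let N ≥ 1 be an integer and ε ∈ (0,1) with N/ε − 1 > 0. If a ≥ ln(N/ε − 1)/(1 − ε), then N · 1/(1 + exp(−a·(1 − ε))) ≥ N − ε; that is, if all N portfolio weights equal 1, then the approximated cardinality ∑_{i=1}^N 1/(1 + exp(−a(1 − ε))) is at least N − ε. -/
/-- Condition C1: if `a ≥ ln(N/ε − 1)/(1 − ε)`, then when all `N` portfolio
weights are `1`, the approximated cardinality `N · 1/(1 + exp(−a(1 − ε)))` is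
at least `N − ε`. -/
theorem condition_C1 (N : ℕ) (hN : 1 ≤ N) (ε a : ℝ)
    (hε : ε ∈ Set.Ioo (0:ℝ) 1) (hpos : 0 < (N : ℝ) / ε - 1)
    (ha : Real.log ((N : ℝ) / ε - 1) / (1 - ε) ≤ a) :
    (N : ℝ) - ε ≤ (N : ℝ) * (1 / (1 + Real.exp (-a * (1 - ε)))) := by
  obtain ⟨hε0, hε1⟩ := hε
  have hNε : ε < (N : ℝ) := lt_of_lt_of_le hε1 (by exact_mod_cast hN)
  have hNε0 : 0 < (N : ℝ) - ε := by linarith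
  have h1ε : 0 < 1 - ε := by linarith
  have hla : Real.log ((N : ℝ) / ε - 1) ≤ a * (1 - ε) := by
    have := (div_le_iff₀ h1ε).mp ha
    linarith
  have hexp : ((N : ℝ) / ε - 1) ≤ Real.exp (a * (1 - ε)) := by
    calc (N : ℝ) / ε - 1 = Real.exp (Real.log ((N:ℝ)/ε - 1)) :=
          (Real.exp_log hpos).symm
      _ ≤ _ := Real.exp_le_exp.mpr hla
  have hkey : Real.exp (-a * (1 - ε)) ≤ ε / ((N : ℝ) - ε) := by
    rw [neg_mul, Real.exp_neg]
    rw [inv_le_iff_one_le_mul₀ (Real.exp_pos _)] at *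
    have hx : (N : ℝ) / ε - 1 = ((N:ℝ) - ε)/ε := by field_simp
    calc (1:ℝ) = (((N:ℝ) - ε)/ε) * (ε / ((N:ℝ) - ε)) := by
          field_simp
      _ ≤ Real.exp (a * (1 - ε)) * (ε / ((N:ℝ) - ε)) := by
          apply mul_le_mul_of_nonneg_right _ (by positivity)
          rw [← hx]; exact hexp
      _ = ε / ((N:ℝ) - ε) * Real.exp (a * (1 - ε)) := mul_comm _ _
  have hden : 1 + Real.exp (-a * (1 - ε)) ≤ (N : ℝ) / ((N:ℝ) - ε) := by
    have : (N : ℝ) / ((N:ℝ) - ε) = 1 + ε / ((N:ℝ) - ε) := by field_simp; ring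
    linarith
  have hdpos : 0 < 1 + Real.exp (-a * (1 - ε)) := by positivity
  rw [mul_one_div, le_div_iff₀ hdpos]
  calc ((N:ℝ) - ε) * (1 + Real.exp (-a * (1 - ε)))
      ≤ ((N:ℝ) - ε) * ((N:ℝ) / ((N:ℝ) - ε)) :=
        mul_le_mul_of_nonneg_left hden (le_of_lt hNε0)
    _ = (N:ℝ) := by field_simp
end
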